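/- arXiv:1902.08573 — 4 statements merged into one kernel-verified Lean document; each statement's English description precedes it below -/
import Mathlib

section
/- Let ω be a modulus of continuity satisfying the Osgood condition, θ(ρ) = ∫_{1/ρ}^1 ds/ω(s), ψ_{λ,q}(y) = θ⁻¹(−λq log y) for y ∈ (0,1], λ > 0, q > 0, and φ_{λ,q}(y) = q ∫_1^y ψ_{λ,q}(z) dz. Then φ_{λ,q} satisfies the differential equation y·φ''_{λ,q}(y) = −λ·(φ'_{λ,q}(y))²·ω(q/φ'_{λ,q}(y)) for all y ∈ (0,1). -/
theorem stmt_3 (ω : ℝ → ℝ)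
    (hcont : ContinuousOn ω (Set.Icc 0 1))
    (hmono : MonotoneOn ω (Set.Icc 0 1))
    (hconc : ConcaveOn ℝ (Set.Icc 0 1) ω)
    (hω0 : ω 0 = 0)
    (hrange : ∀ s ∈ Set.Icc (0:ℝ) 1, ω s ∈ Set.Icc (0:ℝ) 1)
    (hpos : ∀ s ∈ Set.Ioc (0:ℝ) 1, 0 < ω s)
    (hOsgood : Filter.Tendsto (fun ε : ℝ => ∫ s in ε..1, 1 / ω s)
      (nhdsWithin 0 (Set.Ioi 0)) Filter.atTop)
    (θ ψ φ : ℝ → ℝ) (lam q : ℝ) (hlam : 0 < lam) (hq : 0 < q)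
    (hθ : ∀ ρ : ℝ, 1 ≤ ρ → θ ρ = ∫ s in (1/ρ)..1, 1 / ω s)
    -- ψ is the composition of θ⁻¹ with y ↦ -λq log y
    (hψ_mem : ∀ y ∈ Set.Ioc (0:ℝ) 1, ψ y ∈ Set.Ici (1:ℝ))
    (hψ : ∀ y ∈ Set.Ioc (0:ℝ) 1, θ (ψ y) = -(lam * q * Real.log y))
    (hφ : ∀ y ∈ Set.Ioc (0:ℝ) 1, φ y = q * ∫ z in (1:ℝ)..y, ψ z) :
    ∀ y ∈ Set.Ioo (0:ℝ) 1,
      y * deriv (deriv φ) y = -lam * (deriv φ y) ^ 2 * ω (q / deriv φ y) := by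
  have hlamq : (0:ℝ) < lam * q := mul_pos hlam hq
  -- continuity of 1/ω on Ioc 0 1
  have hwcont : ContinuousOn (fun s => 1 / ω s) (Set.Ioc 0 1) := by
    apply ContinuousOn.div continuousOn_const
      (hcont.mono (fun x hx => ⟨le_of_lt hx.1, hx.2⟩))
    exact fun x hx => (hpos x hx).ne'
  -- interval integrability of 1/ω between points of Ioc 0 1
  have hInt : ∀ a b : ℝ, a ∈ Set.Ioc (0:ℝ) 1 → b ∈ Set.Ioc (0:ℝ) 1 →
      IntervalIntegrable (fun s => 1 / ω s) MeasureTheory.volume a b := by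
    intro a b ha hb
    exact (hwcont.mono (Set.ordConnected_Ioc.uIcc_subset ha hb)).intervalIntegrable
  -- θ is strictly monotone on Ici 1
  have hθmono : StrictMonoOn θ (Set.Ici (1:ℝ)) := by
    intro a ha b hb hab
    have ha1 : (1:ℝ) ≤ a := ha
    have hb1 : (1:ℝ) ≤ b := hb
    have ha0 : (0:ℝ) < a := lt_of_lt_of_le one_pos ha1
    have hb0 : (0:ℝ) < b := lt_of_lt_of_le one_pos hb1
    have hma : (1:ℝ)/a ∈ Set.Ioc (0:ℝ) 1 := ⟨by positivity, by
      rw [div_le_one ha0]; exact ha1⟩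
    have hmb : (1:ℝ)/b ∈ Set.Ioc (0:ℝ) 1 := ⟨by positivity, by
      rw [div_le_one hb0]; exact hb1⟩
    have hba : (1:ℝ)/b < 1/a := by
      apply div_lt_div_of_pos_left one_pos ha0 hab
    rw [hθ a ha1, hθ b hb1]
    have hsplit : (∫ s in (1/b)..(1/a), 1/ω s) + ∫ s in (1/a)..1, 1/ω s
        = ∫ s in (1/b)..1, 1/ω s :=
      intervalIntegral.integral_add_adjacent_intervals (hInt _ _ hmb hma)
        (hInt _ _ hma ⟨one_pos, le_refl 1⟩)
    have hposint : 0 < ∫ s in (1/b)..(1/a), 1/ω s := by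
      apply intervalIntegral.intervalIntegral_pos_of_pos_on (hInt _ _ hmb hma)
      · intro x hx
        have hx' : x ∈ Set.Ioc (0:ℝ) 1 := ⟨lt_trans hmb.1 hx.1, le_trans (le_of_lt hx.2) hma.2⟩
        exact div_pos one_pos (hpos x hx')
      · exact hba
    linarith
  have hθ1 : θ 1 = 0 := by
    rw [hθ 1 le_rfl]
    norm_num
  -- ψ y > 1 on Ioo 0 1
  have hψgt : ∀ y ∈ Set.Ioo (0:ℝ) 1, 1 < ψ y := by
    intro y hy
    have hy' : y ∈ Set.Ioc (0:ℝ) 1 := ⟨hy.1, le_of_lt hy.2⟩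
    have hlog : Real.log y < 0 := Real.log_neg hy.1 hy.2
    have ht : 0 < -(lam * q * Real.log y) := by nlinarith
    rcases lt_or_eq_of_le (show (1:ℝ) ≤ ψ y from hψ_mem y hy') with h | h
    · exact h
    · exfalso
      have h2 := hψ y hy'
      rw [← h, hθ1] at h2
      linarith
  -- continuity of ψ on Ioc 0 1
  have hψcont : ContinuousOn ψ (Set.Ioc 0 1) := by
    intro x hx
    have hx0 : (0:ℝ) < x := hx.1
    have hlogc : Filter.Tendsto (fun y => -(lam * q * Real.log y)) (nhdsWithin x (Set.Ioc 0 1))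
        (nhds (-(lam * q * Real.log x))) := by
      apply Filter.Tendsto.neg
      exact (((Real.continuousAt_log hx0.ne').const_smul (lam*q)).continuousWithinAt).tendsto
    rw [ContinuousWithinAt]
    rw [tendsto_order]
    constructor
    · intro a ha
      rcases lt_or_ge a 1 with h1 | h1
      · filter_upwards [self_mem_nhdsWithin] with y hy
        exact lt_of_lt_of_le h1 (hψ_mem y hy)
      · have hθa : θ a < θ (ψ x) := hθmono h1 (hψ_mem x hx) ha
        rw [hψ x hx] at hθa
        filter_upwards [hlogc.eventually (eventually_gt_nhds hθa), self_mem_nhdsWithin]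
          with y h2 h3
        by_contra hle
        push_neg at hle
        have : θ (ψ y) ≤ θ a := hθmono.monotoneOn (hψ_mem y h3) h1 hle
        rw [hψ y h3] at this
        linarith
    · intro b hb
      have hb1 : (1:ℝ) < b := lt_of_le_of_lt (hψ_mem x hx) hb
      have hθb : θ (ψ x) < θ b := hθmono (hψ_mem x hx) (le_of_lt hb1) hb
      rw [hψ x hx] at hθb
      filter_upwards [hlogc.eventually (eventually_lt_nhds hθb), self_mem_nhdsWithin]
        with y h2 h3
      by_contra hle
      push_neg at hle
      have : θ b ≤ θ (ψ y) := hθmono.monotoneOn (le_of_lt hb1) (hψ_mem y h3) hle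
      rw [hψ y h3] at this
      linarith
  have hψcontAt : ∀ y ∈ Set.Ioo (0:ℝ) 1, ContinuousAt ψ y := by
    intro y hy
    exact (hψcont.mono (Set.Ioo_subset_Ioc_self)).continuousAt (isOpen_Ioo.mem_nhds hy)
  -- φ has derivative q ψ y at y ∈ Ioo 0 1
  have hφd : ∀ y ∈ Set.Ioo (0:ℝ) 1, HasDerivAt φ (q * ψ y) y := by
    intro y hy
    have hsub : Set.uIcc (1:ℝ) y ⊆ Set.Ioc 0 1 :=
      Set.ordConnected_Ioc.uIcc_subset ⟨one_pos, le_refl 1⟩ ⟨hy.1, le_of_lt hy.2⟩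
    have hint : IntervalIntegrable ψ MeasureTheory.volume 1 y :=
      (hψcont.mono hsub).intervalIntegrable
    have hmeas : StronglyMeasurableAtFilter ψ (nhds y) MeasureTheory.volume :=
      ContinuousOn.stronglyMeasurableAtFilter isOpen_Ioo
        (hψcont.mono Set.Ioo_subset_Ioc_self) y hy
    have h := intervalIntegral.integral_hasDerivAt_right hint hmeas (hψcontAt y hy)
    have h2 := h.const_mul q
    apply h2.congr_of_eventuallyEq
    filter_upwards [isOpen_Ioo.mem_nhds hy] with z hz
    exact hφ z ⟨hz.1, le_of_lt hz.2⟩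
  intro y₀ hy₀
  obtain ⟨hy₀0, hy₀1⟩ := hy₀
  have hy₀mem : y₀ ∈ Set.Ioc (0:ℝ) 1 := ⟨hy₀0, le_of_lt hy₀1⟩
  set ρ := ψ y₀ with hρdef
  have hρ1 : 1 < ρ := hψgt y₀ ⟨hy₀0, hy₀1⟩
  have hρ0 : 0 < ρ := lt_trans one_pos hρ1
  have hρinv : (1:ℝ)/ρ ∈ Set.Ioo (0:ℝ) 1 := ⟨by positivity, by rw [div_lt_one hρ0]; exact hρ1⟩
  have hωρ : 0 < ω (1/ρ) := hpos _ ⟨hρinv.1, le_of_lt hρinv.2⟩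
  -- derivative of θ at ρ
  have hF : HasDerivAt (fun u => ∫ s in u..1, 1/ω s) (-(1/ω (1/ρ))) (1/ρ) := by
    apply intervalIntegral.integral_hasDerivAt_left
      (hInt _ _ ⟨hρinv.1, le_of_lt hρinv.2⟩ ⟨one_pos, le_refl 1⟩)
    · exact ContinuousOn.stronglyMeasurableAtFilter isOpen_Ioo
        (hwcont.mono Set.Ioo_subset_Ioc_self) _ hρinv
    · exact (hwcont.mono Set.Ioo_subset_Ioc_self).continuousAt (isOpen_Ioo.mem_nhds hρinv)
  have hinvd : HasDerivAt (fun x : ℝ => 1/x) (-(1/ρ^2)) ρ := by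
    simpa [one_div] using hasDerivAt_inv hρ0.ne'
  have hθd : HasDerivAt θ (1/(ρ^2 * ω (1/ρ))) ρ := by
    have hcomp : HasDerivAt (fun x : ℝ => ∫ s in (1/x)..1, 1/ω s)
        (-(1/ω (1/ρ)) * -(1/ρ^2)) ρ := hF.comp ρ hinvd
    have heq : θ =ᶠ[nhds ρ] fun x : ℝ => ∫ s in (1/x)..1, 1/ω s := by
      filter_upwards [eventually_gt_nhds hρ1] with x hx
      exact hθ x (le_of_lt hx)
    have h2 := HasDerivAt.congr_of_eventuallyEq hcomp heq
    convert h2 using 1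
    · rfl
    · rfl
    · ring
  have hθd' : (1:ℝ)/(ρ^2 * ω (1/ρ)) ≠ 0 := by positivity
  -- the local inverse g of θ
  set t₀ := -(lam * q * Real.log y₀) with ht₀def
  have hlog0 : Real.log y₀ < 0 := Real.log_neg hy₀0 hy₀1
  have ht₀pos : 0 < t₀ := by rw [ht₀def]; nlinarith
  set g : ℝ → ℝ := fun t => ψ (Real.exp (-(t/(lam*q)))) with hgdef
  have hgt₀ : g t₀ = ρ := by
    rw [hgdef]
    simp only [ht₀def]
    rw [show -(-(lam * q * Real.log y₀) / (lam * q)) = Real.log y₀ by field_simp,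
      Real.exp_log hy₀0]
  have hgc : ContinuousAt g t₀ := by
    apply ContinuousAt.comp
    · rw [show Real.exp (-(t₀/(lam*q))) = y₀ by
        rw [ht₀def, show -(-(lam * q * Real.log y₀) / (lam * q)) = Real.log y₀ by field_simp,
          Real.exp_log hy₀0]]
      exact hψcontAt y₀ ⟨hy₀0, hy₀1⟩
    · exact ((continuousAt_id.div_const (lam*q)).neg).rexp
  have hfg : ∀ᶠ t in nhds t₀, θ (g t) = t := by
    filter_upwards [eventually_gt_nhds ht₀pos] with t ht
    have hyt : Real.exp (-(t/(lam*q))) ∈ Set.Ioc (0:ℝ) 1 := by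
      constructor
      · exact Real.exp_pos _
      · rw [Real.exp_le_one_iff]
        have : 0 < t/(lam*q) := div_pos ht hlamq
        linarith
    rw [hgdef]
    simp only []
    rw [hψ _ hyt, Real.log_exp]
    field_simp
  have hθdg : HasDerivAt θ (1/(ρ^2 * ω (1/ρ))) (g t₀) := by rw [hgt₀]; exact hθd
  have hgd : HasDerivAt g ((1/(ρ^2 * ω (1/ρ)))⁻¹) t₀ :=
    HasDerivAt.of_local_left_inverse hgc hθdg hθd' hfg
  -- ψ has derivative
  have hLd : HasDerivAt (fun y : ℝ => -(lam * q * Real.log y)) (-(lam * q / y₀)) y₀ := by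
    have := ((Real.hasDerivAt_log hy₀0.ne').const_mul (lam * q)).neg
    convert this using 1
    · rfl
    · rfl
    · rfl
    · rw [div_eq_mul_inv]
  have hψd : HasDerivAt ψ ((1/(ρ^2 * ω (1/ρ)))⁻¹ * (-(lam * q / y₀))) y₀ := by
    have hcomp := hgd.comp y₀ hLd
    apply hcomp.congr_of_eventuallyEq
    filter_upwards [isOpen_Ioo.mem_nhds (⟨hy₀0, hy₀1⟩ : y₀ ∈ Set.Ioo (0:ℝ) 1)] with y hy
    show ψ y = g (-(lam * q * Real.log y))
    rw [hgdef]
    simp only []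
    rw [show -(-(lam * q * Real.log y) / (lam * q)) = Real.log y by field_simp,
      Real.exp_log hy.1]
  -- assemble
  have hderivφ : ∀ y ∈ Set.Ioo (0:ℝ) 1, deriv φ y = q * ψ y := fun y hy => (hφd y hy).deriv
  have hd2 : deriv (deriv φ) y₀ = q * ((1/(ρ^2 * ω (1/ρ)))⁻¹ * (-(lam * q / y₀))) := by
    have heq : deriv φ =ᶠ[nhds y₀] fun y => q * ψ y := by
      filter_upwards [isOpen_Ioo.mem_nhds (⟨hy₀0, hy₀1⟩ : y₀ ∈ Set.Ioo (0:ℝ) 1)] with y hy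
      exact hderivφ y hy
    rw [heq.deriv_eq]
    exact (hψd.const_mul q).deriv
  rw [hd2, hderivφ y₀ ⟨hy₀0, hy₀1⟩]
  have harg : q / (q * ρ) = 1/ρ := by field_simp
  rw [harg]
  have : (1/(ρ^2 * ω (1/ρ)))⁻¹ = ρ^2 * ω (1/ρ) := by
    rw [one_div, inv_inv]
  rw [this]
  field_simp
  rw [← hρdef]
end

section
/- Let ω be a modulus of continuity satisfying the Osgood condition, φ a solution of y·φ''(y) = −λ(φ'(y))²ω(q/φ'(y)) on (0,1) with λ > 0, q > 0, φ(1) = 0, φ' = q·ψ > 0 where ψ ≥ 1, and let τ > 0. Define h : (0,1) → (q,∞) by h(z) = e^{−2τφ(z)/z}·φ'(z). Then h is strictly decreasing, lim_{z→0⁺} h(z) = +∞, and lim_{z→1⁻} h(z) = q. -/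
open Set Filter Real

set_option maxHeartbeats 1000000 in
theorem stmt_8 (ω : ℝ → ℝ)
    (hcont : ContinuousOn ω (Set.Icc 0 1))
    (hmono : MonotoneOn ω (Set.Icc 0 1))
    (hconc : ConcaveOn ℝ (Set.Icc 0 1) ω)
    (hω0 : ω 0 = 0)
    (hrange : ∀ s ∈ Set.Icc (0:ℝ) 1, ω s ∈ Set.Icc (0:ℝ) 1)
    (hpos : ∀ s ∈ Set.Ioc (0:ℝ) 1, 0 < ω s)
    (hOsgood : Filter.Tendsto (fun ε : ℝ => ∫ s in ε..1, 1 / ω s)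
      (nhdsWithin 0 (Set.Ioi 0)) Filter.atTop)
    (φ ψ : ℝ → ℝ) (lam q τ : ℝ) (hlam : 0 < lam) (hq : 0 < q) (hτ : 0 < τ)
    (hψ1 : ∀ y ∈ Set.Ioc (0:ℝ) 1, 1 ≤ ψ y)
    (hφ1 : φ 1 = 0)
    (hφ'1 : ψ 1 = 1)
    (hφneg : ∀ y ∈ Set.Ioo (0:ℝ) 1, φ y < 0)
    (hφderiv : ∀ y ∈ Set.Ioc (0:ℝ) 1, HasDerivAt φ (q * ψ y) y)
    (hODE : ∀ y ∈ Set.Ioo (0:ℝ) 1,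
      y * deriv (deriv φ) y = -lam * (deriv φ y) ^ 2 * ω (q / deriv φ y)) :
    StrictAntiOn (fun z => Real.exp (-(2 * τ * φ z / z)) * (q * ψ z)) (Set.Ioo 0 1) ∧
    Filter.Tendsto (fun z => Real.exp (-(2 * τ * φ z / z)) * (q * ψ z))
      (nhdsWithin 0 (Set.Ioi 0)) Filter.atTop ∧
    Filter.Tendsto (fun z => Real.exp (-(2 * τ * φ z / z)) * (q * ψ z))
      (nhdsWithin 1 (Set.Iio 1)) (nhds q) := by
  have hmem : ∀ y ∈ Set.Ioo (0:ℝ) 1, y ∈ Set.Ioc (0:ℝ) 1 := fun y hy => ⟨hy.1, hy.2.le⟩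
  have hdφ : ∀ y ∈ Set.Ioc (0:ℝ) 1, deriv φ y = q * ψ y := fun y hy => (hφderiv y hy).deriv
  have hψpos : ∀ y ∈ Set.Ioc (0:ℝ) 1, (0:ℝ) < ψ y := fun y hy =>
    lt_of_lt_of_le one_pos (hψ1 y hy)
  -- Mean value theorem helper
  have hMVT : ∀ a b : ℝ, 0 < a → a < b → b ≤ 1 →
      ∃ c ∈ Set.Ioo a b, q * ψ c = (φ b - φ a) / (b - a) := by
    intro a b ha hab hb1
    have hcont : ContinuousOn φ (Set.Icc a b) := fun x hx =>
      ((hφderiv x ⟨lt_of_lt_of_le ha hx.1, le_trans hx.2 hb1⟩).continuousAt).continuousWithinAt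
    have hder : ∀ x ∈ Set.Ioo a b, HasDerivAt φ (q * ψ x) x := fun x hx =>
      hφderiv x ⟨lt_trans ha hx.1, le_trans hx.2.le hb1⟩
    exact exists_hasDerivAt_eq_slope φ (fun x => q * ψ x) hab hcont hder
  -- φ z ≤ -q(1-z)
  have hφle : ∀ z ∈ Set.Ioo (0:ℝ) 1, φ z ≤ -(q * (1 - z)) := by
    intro z hz
    obtain ⟨c, hc, hceq⟩ := hMVT z 1 hz.1 hz.2 le_rfl
    rw [hφ1] at hceq
    have h1 : 1 ≤ ψ c := hψ1 c ⟨lt_trans hz.1 hc.1, hc.2.le⟩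
    have hzne : (0:ℝ) < 1 - z := by linarith [hz.2]
    have h2 : q * ψ c * (1 - z) = 0 - φ z := by
      rw [hceq, div_mul_cancel₀ _ (ne_of_gt hzne)]
    nlinarith [mul_le_mul_of_nonneg_right (mul_le_mul_of_nonneg_left h1 hq.le) hzne.le]
  -- second derivative negative
  have hD : ∀ y ∈ Set.Ioo (0:ℝ) 1, deriv (deriv φ) y < 0 := by
    intro y hy
    have hyI := hmem y hy
    have h0 := hODE y hy
    have hd := hdφ y hyI
    have hψy := hψpos y hyI
    have hψy1 := hψ1 y hyI
    have hω : 0 < ω (q / deriv φ y) := by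
      apply hpos
      rw [hd]
      constructor
      · positivity
      · rw [div_le_one (by positivity)]
        nlinarith
    have hne : (0:ℝ) < deriv φ y := by rw [hd]; positivity
    have hprod : y * deriv (deriv φ) y < 0 := by
      rw [h0]
      nlinarith [mul_pos (mul_pos hlam (pow_pos hne 2)) hω]
    nlinarith [hy.1]
  have hDdiff : ∀ y ∈ Set.Ioo (0:ℝ) 1, DifferentiableAt ℝ (deriv φ) y := by
    intro y hy
    by_contra h
    have h2 := hD y hy
    rw [deriv_zero_of_not_differentiableAt h] at h2
    exact lt_irrefl 0 h2
  -- deriv φ strictly decreasing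
  have hanti : StrictAntiOn (deriv φ) (Set.Ioo 0 1) := by
    intro x hx y hy hxy
    have hsub : Set.Icc x y ⊆ Set.Ioo (0:ℝ) 1 := fun t ht =>
      ⟨lt_of_lt_of_le hx.1 ht.1, lt_of_le_of_lt ht.2 hy.2⟩
    have h := strictAntiOn_of_deriv_neg (convex_Icc x y)
      (fun t ht => (hDdiff t (hsub ht)).continuousAt.continuousWithinAt)
      (fun t ht => hD t (hsub (Set.Ioo_subset_Icc_self (by rwa [interior_Icc] at ht))))
    exact h (Set.left_mem_Icc.2 hxy.le) (Set.right_mem_Icc.2 hxy.le) hxy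
  have hψanti : StrictAntiOn (fun z => q * ψ z) (Set.Ioo 0 1) := by
    intro x hx y hy hxy
    have h := hanti hx hy hxy
    rwa [hdφ x (hmem x hx), hdφ y (hmem y hy)] at h
  -- φ z / z strictly increasing
  have hFd : ∀ z ∈ Set.Ioo (0:ℝ) 1,
      HasDerivAt (fun t => φ t / t) ((q * ψ z * z - φ z) / z ^ 2) z := by
    intro z hz
    have h := (hφderiv z (hmem z hz)).div (hasDerivAt_id z) (ne_of_gt hz.1)
    simpa [Pi.div_def] using h
  have hFmono : StrictMonoOn (fun t => φ t / t) (Set.Ioo 0 1) := by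
    intro x hx y hy hxy
    have hsub : Set.Icc x y ⊆ Set.Ioo (0:ℝ) 1 := fun t ht =>
      ⟨lt_of_lt_of_le hx.1 ht.1, lt_of_le_of_lt ht.2 hy.2⟩
    have h := strictMonoOn_of_deriv_pos (convex_Icc x y)
      (fun t ht => (hFd t (hsub ht)).differentiableAt.continuousAt.continuousWithinAt)
      (fun t ht => by
        have ht' := hsub (Set.Ioo_subset_Icc_self (by rwa [interior_Icc] at ht))
        rw [(hFd t ht').deriv]
        have h1 := hφneg t ht'
        have h2 := hψpos t (hmem t ht')
        have h3 := ht'.1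
        apply div_pos
        · nlinarith [mul_pos (mul_pos hq h2) h3]
        · positivity)
    exact h (Set.left_mem_Icc.2 hxy.le) (Set.right_mem_Icc.2 hxy.le) hxy
  refine ⟨?_, ?_, ?_⟩
  · -- strict antitone
    intro x hx y hy hxy
    have hF := hFmono hx hy hxy
    simp only at hF
    have hE : Real.exp (-(2 * τ * φ y / y)) < Real.exp (-(2 * τ * φ x / x)) := by
      apply Real.exp_lt_exp.2
      rw [mul_div_assoc, mul_div_assoc]
      nlinarith
    have hψxy := hψanti hx hy hxy
    simp only at hψxy
    have hψypos : 0 < q * ψ y := mul_pos hq (hψpos y (hmem y hy))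
    exact mul_lt_mul'' hE hψxy (Real.exp_pos _).le hψypos.le
  · -- limit at 0⁺
    have h1 : Tendsto (fun z : ℝ => z⁻¹ - 1) (nhdsWithin 0 (Set.Ioi 0)) atTop :=
      tendsto_atTop_add_const_right _ (-1) tendsto_inv_nhdsGT_zero
    have h2 : Tendsto (fun z : ℝ => 2 * τ * (q * (1 - z)) / z) (nhdsWithin 0 (Set.Ioi 0))
        atTop := by
      have h3 : Tendsto (fun z : ℝ => 2 * τ * q * (z⁻¹ - 1)) (nhdsWithin 0 (Set.Ioi 0))
          atTop := h1.const_mul_atTop (by positivity)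
      apply h3.congr'
      filter_upwards [self_mem_nhdsWithin] with z hz
      have hz0 : z ≠ 0 := ne_of_gt hz
      field_simp
    have h4 : Tendsto (fun z : ℝ => Real.exp (2 * τ * (q * (1 - z)) / z) * q)
        (nhdsWithin 0 (Set.Ioi 0)) atTop :=
      (Real.tendsto_exp_atTop.comp h2).atTop_mul_const hq
    apply tendsto_atTop_mono' _ _ h4
    filter_upwards [Ioo_mem_nhdsGT_of_mem (show (0:ℝ) ∈ Set.Ico (0:ℝ) 1 by norm_num)]
      with z hz
    have hz0 : (0:ℝ) < z := hz.1
    have hφz := hφle z hz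
    have harg : 2 * τ * (q * (1 - z)) / z ≤ -(2 * τ * φ z / z) := by
      have h2' : 2 * τ * (q * (1 - z)) ≤ 2 * τ * (-φ z) := by nlinarith
      calc 2 * τ * (q * (1 - z)) / z ≤ 2 * τ * (-φ z) / z :=
            (div_le_div_iff_of_pos_right hz0).2 h2'
          _ = -(2 * τ * φ z / z) := by ring
    have hexp := Real.exp_le_exp.2 harg
    have hψz : q ≤ q * ψ z := by nlinarith [hψ1 z (hmem z hz)]
    exact mul_le_mul hexp hψz hq.le (Real.exp_pos _).le
  · -- limit at 1⁻
    have hd1 : HasDerivAt φ q 1 := by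
      have h := hφderiv 1 ⟨one_pos, le_rfl⟩
      rwa [hφ'1, mul_one] at h
    have hslope : Tendsto (slope φ 1) (nhdsWithin 1 ({1}ᶜ)) (nhds q) :=
      hasDerivAt_iff_tendsto_slope.1 hd1
    have hsub : nhdsWithin (1:ℝ) (Set.Iio 1) ≤ nhdsWithin 1 ({1}ᶜ) :=
      nhdsWithin_mono _ (fun x hx => ne_of_lt hx)
    have hsl1 : Tendsto (fun z => slope φ 1 z) (nhdsWithin 1 (Set.Iio 1)) (nhds q) :=
      hslope.mono_left hsub
    have hmap : Tendsto (fun z : ℝ => 2 * z - 1) (nhdsWithin 1 (Set.Iio 1))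
        (nhdsWithin 1 (Set.Iio 1)) := by
      rw [tendsto_nhdsWithin_iff]
      constructor
      · have h : Tendsto (fun z : ℝ => 2 * z - 1) (nhds 1) (nhds 1) := by
          have hc : Continuous (fun z : ℝ => 2 * z - 1) := by continuity
          have h2 := hc.tendsto (1:ℝ)
          norm_num at h2
          exact h2
        exact h.mono_left nhdsWithin_le_nhds
      · filter_upwards [self_mem_nhdsWithin] with z hz
        simp only [Set.mem_Iio] at hz ⊢
        linarith
    have hsl2 : Tendsto (fun z => slope φ 1 (2 * z - 1)) (nhdsWithin 1 (Set.Iio 1))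
        (nhds q) := hsl1.comp hmap
    have hs : Tendsto (fun z => 2 * slope φ 1 (2 * z - 1) - slope φ 1 z)
        (nhdsWithin 1 (Set.Iio 1)) (nhds q) := by
      have h := (hsl2.const_mul 2).sub hsl1
      have he : 2 * q - q = q := by ring
      rwa [he] at h
    have hupper : ∀ᶠ z in nhdsWithin 1 (Set.Iio 1),
        q * ψ z ≤ 2 * slope φ 1 (2 * z - 1) - slope φ 1 z := by
      filter_upwards [Ioo_mem_nhdsLT_of_mem
        (show (1:ℝ) ∈ Set.Ioc (1/2 : ℝ) 1 by norm_num)] with z hz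
      obtain ⟨c, hc, hceq⟩ := hMVT (2 * z - 1) z (by linarith [hz.1]) (by linarith [hz.2])
        hz.2.le
      have hcmem : c ∈ Set.Ioo (0:ℝ) 1 := ⟨by linarith [hc.1, hz.1], by linarith [hc.2, hz.2]⟩
      have hzmem : z ∈ Set.Ioo (0:ℝ) 1 := ⟨by linarith [hz.1], hz.2⟩
      have hcz : deriv φ z < deriv φ c := hanti hcmem hzmem hc.2
      rw [hdφ c (hmem c hcmem), hdφ z (hmem z hzmem)] at hcz
      have hz1 : z - 1 ≠ 0 := by intro h; have := hz.2; linarith [sub_eq_zero.1 h]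
      have heq : (φ z - φ (2 * z - 1)) / (z - (2 * z - 1))
          = 2 * slope φ 1 (2 * z - 1) - slope φ 1 z := by
        rw [slope_def_field, slope_def_field, hφ1]
        have hz2 : 2 * z - 1 - 1 ≠ 0 := by
          intro h; have := hz.2; nlinarith [sub_eq_zero.1 h]
        have hz3 : z - (2 * z - 1) ≠ 0 := by
          intro h; have := hz.2; nlinarith [sub_eq_zero.1 h]
        field_simp
        ring
      rw [← heq, ← hceq]
      exact hcz.le
    have hlower : ∀ᶠ z in nhdsWithin 1 (Set.Iio 1), q ≤ q * ψ z := by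
      filter_upwards [Ioo_mem_nhdsLT_of_mem
        (show (1:ℝ) ∈ Set.Ioc (0:ℝ) 1 by norm_num)] with z hz
      nlinarith [hψ1 z (hmem z hz)]
    have hψtendsto : Tendsto (fun z => q * ψ z) (nhdsWithin 1 (Set.Iio 1)) (nhds q) :=
      tendsto_of_tendsto_of_tendsto_of_le_of_le' tendsto_const_nhds hs hlower hupper
    have hφcont : Tendsto φ (nhdsWithin 1 (Set.Iio 1)) (nhds 0) := by
      have h := hd1.continuousAt.tendsto
      rw [hφ1] at h
      exact h.mono_left nhdsWithin_le_nhds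
    have hzt : Tendsto (fun z : ℝ => z) (nhdsWithin 1 (Set.Iio 1)) (nhds 1) :=
      tendsto_id.mono_left nhdsWithin_le_nhds
    have hdiv : Tendsto (fun z => -(2 * τ * φ z / z)) (nhdsWithin 1 (Set.Iio 1)) (nhds 0) := by
      have h := (((hφcont.const_mul (2 * τ)).div hzt one_ne_zero)).neg
      simpa using h
    have hexp : Tendsto (fun z => Real.exp (-(2 * τ * φ z / z)))
        (nhdsWithin 1 (Set.Iio 1)) (nhds 1) := by
      have h := (Real.continuous_exp.tendsto 0).comp hdiv
      simpa [Function.comp_def] using h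
    have h := hexp.mul hψtendsto
    simpa using h
end

section
/- Suppose û : [0,T] × ℝⁿ → ℂ satisfies, for each ξ, ∂_t û = Σᵢⱼ aᵢⱼ(t)ξᵢξⱼ û − i Σᵢ bᵢ(t)ξᵢ û − c(t)û, with Σᵢⱼ aᵢⱼ(t)ξᵢξⱼ ≥ k_A|ξ|², |Im bᵢ(t)| ≤ k_B, |Re c(t)| ≤ k_C. Then for any γ̄ > 2·max{k_C, n²k_B²/k_A}, the map t ↦ e^{2γ̄t}|û(t,ξ)|² is weakly increasing on [0,T] for every ξ. -/
theorem stmt_13 (n : ℕ) (T kA kB kC : ℝ) (hT : 0 < T)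
    (hkA : 0 < kA) (hkB : 0 < kB) (hkC : 0 < kC)
    (a : Fin n → Fin n → ℝ → ℝ) (b : Fin n → ℝ → ℂ) (c : ℝ → ℂ)
    (u : ℝ → EuclideanSpace ℝ (Fin n) → ℂ)
    (hell : ∀ t ∈ Set.Icc (0:ℝ) T, ∀ ξ : EuclideanSpace ℝ (Fin n),
      kA * ‖ξ‖ ^ 2 ≤ ∑ i, ∑ j, a i j t * ξ i * ξ j)
    (hb : ∀ i, ∀ t ∈ Set.Icc (0:ℝ) T, |(b i t).im| ≤ kB)
    (hc : ∀ t ∈ Set.Icc (0:ℝ) T, |(c t).re| ≤ kC)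
    (hode : ∀ t ∈ Set.Icc (0:ℝ) T, ∀ ξ : EuclideanSpace ℝ (Fin n),
      HasDerivAt (fun s => u s ξ)
        (((∑ i, ∑ j, a i j t * ξ i * ξ j : ℝ) : ℂ) * u t ξ -
          Complex.I * (∑ i, b i t * (ξ i : ℂ)) * u t ξ - c t * u t ξ) t)
    (γ : ℝ) (hγ : γ > 2 * max kC (n ^ 2 * kB ^ 2 / kA)) :
    ∀ ξ : EuclideanSpace ℝ (Fin n),
      MonotoneOn (fun t => Real.exp (2 * γ * t) * ‖u t ξ‖ ^ 2)
        (Set.Icc 0 T) := by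
  intro ξ
  -- key derivative computation
  have key : ∀ t ∈ Set.Icc (0:ℝ) T,
      HasDerivAt (fun s => Real.exp (2 * γ * s) * ‖u s ξ‖ ^ 2)
        (Real.exp (2 * γ * t) * (2 * Complex.normSq (u t ξ) *
          (γ + (∑ i, ∑ j, a i j t * ξ i * ξ j) +
            (∑ i, b i t * (ξ i : ℂ)).im - (c t).re))) t := by
    intro t ht
    have hu := hode t ht ξ
    set A : ℝ := ∑ i, ∑ j, a i j t * ξ i * ξ j with hA
    set B : ℂ := ∑ i, b i t * (ξ i : ℂ) with hB
    set z : ℂ := u t ξ with hz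
    set d : ℂ := (A : ℂ) * z - Complex.I * B * z - c t * z with hd
    have hre : HasDerivAt (fun s => (u s ξ).re) d.re t :=
      (Complex.reCLM.hasFDerivAt.comp_hasDerivAt t hu)
    have him : HasDerivAt (fun s => (u s ξ).im) d.im t :=
      (Complex.imCLM.hasFDerivAt.comp_hasDerivAt t hu)
    have hnsq : HasDerivAt (fun s => Complex.normSq (u s ξ))
        (2 * (d.re * z.re + d.im * z.im)) t := by
      have := (hre.mul hre).add (him.mul him)
      simp only [Complex.normSq_apply]
      refine this.congr_deriv ?_
      ring
    have hexp : HasDerivAt (fun s => Real.exp (2 * γ * s))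
        (Real.exp (2 * γ * t) * (2 * γ)) t := by
      have := ((hasDerivAt_id t).const_mul (2 * γ)).exp
      simpa [mul_comm] using this
    have hmul := hexp.mul hnsq
    have hfun : (fun s => Real.exp (2 * γ * s) * ‖u s ξ‖ ^ 2)
        = (fun s => Real.exp (2 * γ * s) * Complex.normSq (u s ξ)) := by
      funext s; rw [Complex.sq_norm]
    rw [hfun]
    refine hmul.congr_deriv ?_
    -- compute d.re * z.re + d.im * z.im = (A + B.im - (c t).re) * normSq z
    have hdz : d * (starRingEnd ℂ) z = ((A : ℂ) - Complex.I * B - c t) *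
        (Complex.normSq z : ℂ) := by
      rw [← Complex.mul_conj]; rw [hd]; ring
    have hre2 : d.re * z.re + d.im * z.im = (A + B.im - (c t).re) * Complex.normSq z := by
      have h1 : (d * (starRingEnd ℂ) z).re = d.re * z.re + d.im * z.im := by
        simp [Complex.mul_re, Complex.conj_re, Complex.conj_im]
      have h2 : (((A : ℂ) - Complex.I * B - c t) * (Complex.normSq z : ℂ)).re
          = (A + B.im - (c t).re) * Complex.normSq z := by
        simp [Complex.mul_re]
      rw [← h1, hdz, h2]
    rw [hre2]
    have : Complex.normSq (u t ξ) = Complex.normSq z := rfl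
    rw [this]
    ring
  -- nonnegativity of the derivative expression
  have hnonneg : ∀ t ∈ Set.Icc (0:ℝ) T,
      0 ≤ Real.exp (2 * γ * t) * (2 * Complex.normSq (u t ξ) *
          (γ + (∑ i, ∑ j, a i j t * ξ i * ξ j) +
            (∑ i, b i t * (ξ i : ℂ)).im - (c t).re)) := by
    intro t ht
    have hcoord : ∀ i : Fin n, |ξ i| ≤ ‖ξ‖ := by
      intro i
      have h1 : ξ i ^ 2 ≤ ∑ j, ξ j ^ 2 := by
        apply Finset.single_le_sum (fun j _ => sq_nonneg (ξ j)) (Finset.mem_univ i)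
      have h2 : ‖ξ‖ = Real.sqrt (∑ j, ξ j ^ 2) := by
        rw [EuclideanSpace.norm_eq]
        congr 1
        apply Finset.sum_congr rfl
        intro j _
        rw [Real.norm_eq_abs, sq_abs]
      rw [h2, ← Real.sqrt_sq_eq_abs]
      exact Real.sqrt_le_sqrt h1
    have hBim : -(n * kB * ‖ξ‖) ≤ (∑ i, b i t * (ξ i : ℂ)).im := by
      have h1 : (∑ i, b i t * (ξ i : ℂ)).im = ∑ i, (b i t).im * ξ i := by
        rw [Complex.im_sum]
        apply Finset.sum_congr rfl
        intro i _
        simp [Complex.mul_im]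
      rw [h1]
      have h2 : ∀ i : Fin n, -(kB * ‖ξ‖) ≤ (b i t).im * ξ i := by
        intro i
        have := abs_mul ((b i t).im) (ξ i)
        have hle : |(b i t).im * ξ i| ≤ kB * ‖ξ‖ := by
          rw [this]
          exact mul_le_mul (hb i t ht) (hcoord i) (abs_nonneg _)
            (le_of_lt hkB)
        linarith [neg_abs_le ((b i t).im * ξ i)]
      calc -(↑n * kB * ‖ξ‖) = ∑ _i : Fin n, -(kB * ‖ξ‖) := by
            simp [Finset.sum_const]; ring
        _ ≤ ∑ i, (b i t).im * ξ i := Finset.sum_le_sum (fun i _ => h2 i)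
    have hA := hell t ht ξ
    have hcre : (c t).re ≤ kC := (abs_le.mp (hc t ht)).2
    have hP : 0 ≤ γ + (∑ i, ∑ j, a i j t * ξ i * ξ j) +
        (∑ i, b i t * (ξ i : ℂ)).im - (c t).re := by
      have hmax1 : kC ≤ max kC ((n:ℝ) ^ 2 * kB ^ 2 / kA) := le_max_left _ _
      have hmax2 : (n:ℝ) ^ 2 * kB ^ 2 / kA ≤ max kC ((n:ℝ) ^ 2 * kB ^ 2 / kA) :=
        le_max_right _ _
      have hγ' : kC + (n:ℝ) ^ 2 * kB ^ 2 / kA < γ := by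
        push_cast at hγ ⊢
        linarith
      have hdiv : (n:ℝ) ^ 2 * kB ^ 2 < (γ - kC) * kA := by
        have : (n:ℝ) ^ 2 * kB ^ 2 / kA < γ - kC := by linarith
        exact (div_lt_iff₀ hkA).mp this
      set r := ‖ξ‖
      have hr : 0 ≤ r := norm_nonneg _
      nlinarith [sq_nonneg (2 * kA * r - (n:ℝ) * kB), mul_pos hkA hkA,
        sq_nonneg r]
    exact mul_nonneg (Real.exp_pos _).le (mul_nonneg (mul_nonneg (by norm_num) (Complex.normSq_nonneg _)) hP)
  apply monotoneOn_of_deriv_nonneg (convex_Icc 0 T)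
  · intro t ht
    exact ((key t ht).continuousAt).continuousWithinAt
  · intro t ht
    rw [interior_Icc] at ht
    exact ((key t (Set.mem_Icc_of_Ioo ht)).differentiableAt).differentiableWithinAt
  · intro t ht
    rw [interior_Icc] at ht
    rw [(key t (Set.mem_Icc_of_Ioo ht)).deriv]
    exact hnonneg t (Set.mem_Icc_of_Ioo ht)
end

section
/- Let ω(s) = s(1−log s)log(1−log s), λ, q = k_A > 0, ψ(y) = exp(e^{y^{−λk_A}} − 1), φ(y) = −k_A∫_y^1ψ(z)dz, and Λ(y) = y·φ(1/y) for y ≥ 1. Then lim_{ζ→+∞} ψ(1/ζ)/|Λ(ζ)| = +∞. -/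
open Filter Real

private lemma aux1_stmt19 (c₁ c₂ b C : ℝ) (h1 : 0 < c₁) (h2 : 0 < c₂) :
    Tendsto (fun u : ℝ => C * Real.log u - c₁ * (u ^ b * Real.exp (c₂ * u)))
      atTop atBot := by
  set K := |C - c₁ * b| with hK
  have hhalf : Tendsto (fun u : ℝ => u ^ (1/2 : ℝ)) atTop atTop :=
    tendsto_rpow_atTop (by norm_num)
  have hA : Tendsto (fun u : ℝ => c₁ * c₂ * u ^ (1/2 : ℝ) - 2 * K) atTop atTop := by
    apply tendsto_atTop_add_const_right
    exact hhalf.const_mul_atTop (by positivity)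
  have hg : Tendsto (fun u : ℝ => u ^ (1/2:ℝ) * (c₁ * c₂ * u ^ (1/2:ℝ) - 2 * K) + c₁)
      atTop atTop := tendsto_atTop_add_const_right _ _ (hhalf.atTop_mul_atTop₀ hA)
  have hneg : Tendsto (fun u : ℝ => -(u ^ (1/2:ℝ) * (c₁ * c₂ * u ^ (1/2:ℝ) - 2 * K) + c₁))
      atTop atBot := tendsto_neg_atBot_iff.mpr hg
  apply tendsto_atBot_mono' atTop _ hneg
  filter_upwards [eventually_ge_atTop (1:ℝ)] with u hu
  have hu0 : (0:ℝ) < u := by linarith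
  have hlog0 : 0 ≤ Real.log u := Real.log_nonneg hu
  have hexp : u ^ b * Real.exp (c₂ * u) = Real.exp (Real.log u * b + c₂ * u) := by
    rw [Real.exp_add, Real.rpow_def_of_pos hu0]
  have h3 : Real.log u * b + c₂ * u + 1 ≤ u ^ b * Real.exp (c₂ * u) := by
    rw [hexp]; exact Real.add_one_le_exp _
  have h4 : Real.log u ≤ 2 * u ^ (1/2:ℝ) := by
    have := Real.log_le_rpow_div hu0.le (by norm_num : (0:ℝ) < 1/2)
    linarith
  have h5 : (C - c₁ * b) * Real.log u ≤ K * (2 * u ^ (1/2:ℝ)) := by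
    calc (C - c₁ * b) * Real.log u ≤ K * Real.log u :=
          mul_le_mul_of_nonneg_right (le_abs_self _) hlog0
      _ ≤ K * (2 * u ^ (1/2:ℝ)) := mul_le_mul_of_nonneg_left h4 (abs_nonneg _)
  have h6 : u ^ (1/2:ℝ) * u ^ (1/2:ℝ) = u := by
    rw [← Real.rpow_add hu0]; norm_num
  nlinarith [mul_le_mul_of_nonneg_left h3 h1.le, h5, h6, mul_pos h1 h2]

set_option maxHeartbeats 2000000 in
theorem stmt_19 (lam kA : ℝ) (hlam : 0 < lam) (hkA : 0 < kA)
    (ω ψ φ Λ : ℝ → ℝ)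
    (hω : ∀ s : ℝ, 0 < s → ω s = s * (1 - Real.log s) * Real.log (1 - Real.log s))
    (hψ : ∀ y : ℝ, 0 < y → ψ y = Real.exp (Real.exp (y ^ (-(lam * kA))) - 1))
    (hφ : ∀ y : ℝ, 0 < y → y ≤ 1 → φ y = -(kA * ∫ z in y..1, ψ z))
    (hΛ : ∀ y : ℝ, 1 ≤ y → Λ y = y * φ (1 / y)) :
    Filter.Tendsto (fun ζ : ℝ => ψ (1 / ζ) / |Λ ζ|) Filter.atTop Filter.atTop := by
  clear hω
  set a := lam * kA with ha_def
  have ha : 0 < a := mul_pos hlam hkA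
  have hψpos : ∀ y : ℝ, 0 < y → 0 < ψ y := fun y hy => by
    rw [hψ y hy]; exact Real.exp_pos _
  have hmono : ∀ x y : ℝ, 0 < x → x ≤ y → ψ y ≤ ψ x := by
    intro x y hx hxy
    rw [hψ x hx, hψ y (lt_of_lt_of_le hx hxy)]
    have h := Real.rpow_le_rpow_of_nonpos hx hxy (neg_nonpos.mpr ha.le)
    exact Real.exp_le_exp.mpr (sub_le_sub_right (Real.exp_le_exp.mpr h) 1)
  have hcont : ∀ x y : ℝ, 0 < x → ContinuousOn ψ (Set.Icc x y) := by
    intro x y hx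
    have hc : ContinuousOn (fun z : ℝ => Real.exp (Real.exp (z ^ (-a)) - 1))
        (Set.Icc x y) := by
      apply Real.continuous_exp.comp_continuousOn
      apply ContinuousOn.sub _ continuousOn_const
      apply Real.continuous_exp.comp_continuousOn
      intro z hz
      exact (Real.continuousAt_rpow_const z (-a)
        (Or.inl (ne_of_gt (lt_of_lt_of_le hx hz.1)))).continuousWithinAt
    exact hc.congr fun z hz => hψ z (lt_of_lt_of_le hx hz.1)
  -- substitution u = (ζ⁻¹)^(-a)
  have hu : Tendsto (fun ζ : ℝ => (ζ⁻¹ : ℝ) ^ (-a)) atTop atTop := by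
    apply (tendsto_rpow_atTop ha).congr'
    filter_upwards [eventually_gt_atTop (0:ℝ)] with ζ hζ
    rw [Real.rpow_neg (inv_nonneg.mpr hζ.le), Real.inv_rpow hζ.le, inv_inv]
  set c₂ : ℝ := (2:ℝ) ^ (-a) with hc₂def
  have hc₂ : 0 < c₂ := Real.rpow_pos_of_pos two_pos _
  set c₁ : ℝ := a * c₂ / 2 with hc₁def
  have hc₁ : 0 < c₁ := by positivity
  -- the key atBot limit
  have hlogD : Tendsto (fun ζ : ℝ =>
      Real.log ζ - (Real.exp ((ζ⁻¹) ^ (-a)) - Real.exp ((ζ⁻¹ + (ζ⁻¹)^2) ^ (-a))))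
      atTop atBot := by
    apply tendsto_atBot_mono' atTop _
      ((aux1_stmt19 c₁ c₂ (1 - 1/a) (1/a) hc₁ hc₂).comp hu)
    filter_upwards [eventually_ge_atTop (2:ℝ)] with ζ hζ
    have hζ0 : (0:ℝ) < ζ := by linarith
    set ε : ℝ := ζ⁻¹ with hεdef
    have hε : 0 < ε := inv_pos.mpr hζ0
    have hε2 : ε ≤ 1/2 := by
      rw [hεdef]
      rw [show (1:ℝ)/2 = 2⁻¹ by norm_num]
      exact inv_anti₀ two_pos hζ
    set δ : ℝ := ε + ε^2 with hδdef
    have hδpos : 0 < δ := by positivity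
    have hδε : ε ≤ δ := by nlinarith
    have hδ2 : δ ≤ 2 * ε := by nlinarith
    set u : ℝ := ε ^ (-a) with hudef
    have hupos : 0 < u := Real.rpow_pos_of_pos hε _
    -- log ζ = (1/a) * log u
    have f1 : Real.log ζ = (1/a) * Real.log u := by
      rw [hudef, Real.log_rpow hε, hεdef, Real.log_inv]
      field_simp
    -- c₂ * u ≤ δ^(-a)
    have f3 : c₂ * u ≤ δ ^ (-a) := by
      have h1 : (2*ε) ^ (-a) ≤ δ ^ (-a) :=
        Real.rpow_le_rpow_of_nonpos hδpos hδ2 (neg_nonpos.mpr ha.le)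
      have h2 : (2*ε) ^ (-a) = c₂ * u := by
        rw [Real.mul_rpow (by norm_num) hε.le]
      linarith [h2 ▸ h1]
    -- ε^(-a) - δ^(-a) ≥ c₁ * (ε * u)
    have f4 : c₁ * (ε * u) ≤ ε ^ (-a) - δ ^ (-a) := by
      have hδfac : δ = ε * (1 + ε) := by rw [hδdef]; ring
      have hδrw : δ ^ (-a) = u * (1+ε) ^ (-a) := by
        rw [hδfac, Real.mul_rpow hε.le (by linarith), hudef]
      set t : ℝ := (1+ε) ^ (-a) with htdef
      have ht_pos : 0 < t := Real.rpow_pos_of_pos (by linarith) _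
      have hlog1 : ε/2 ≤ Real.log (1+ε) := by
        have h := Real.log_le_sub_one_of_pos (show (0:ℝ) < (1+ε)⁻¹ by positivity)
        rw [Real.log_inv] at h
        have hinv : (1+ε) * (1+ε)⁻¹ = 1 := mul_inv_cancel₀ (by linarith)
        nlinarith
      have hbern : Real.log (1+ε) * a + 1 ≤ Real.exp (Real.log (1+ε) * a) :=
        Real.add_one_le_exp _
      have hprod : Real.exp (Real.log (1+ε) * a) * t = 1 := by
        rw [htdef, Real.rpow_def_of_pos (by linarith), ← Real.exp_add,
          show Real.log (1+ε) * a + Real.log (1+ε) * (-a) = 0 by ring, Real.exp_zero]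
      have h1t : a * Real.log (1+ε) * t ≤ 1 - t := by nlinarith
      have ht_lb : c₂ ≤ t := by
        rw [hc₂def, htdef]
        exact Real.rpow_le_rpow_of_nonpos (by linarith) (by linarith) (neg_nonpos.mpr ha.le)
      have hkey : c₁ * ε ≤ 1 - t := by
        have hlogpos : 0 ≤ Real.log (1+ε) := by linarith
        nlinarith [mul_le_mul (mul_le_mul_of_nonneg_left hlog1 ha.le) ht_lb hc₂.le
          (by positivity : 0 ≤ a * Real.log (1+ε))]
      have : ε ^ (-a) - δ ^ (-a) = u * (1 - t) := by rw [hδrw, hudef]; ring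
      rw [this]
      calc c₁ * (ε * u) = (c₁ * ε) * u := by ring
        _ ≤ (1 - t) * u := mul_le_mul_of_nonneg_right hkey hupos.le
        _ = u * (1 - t) := by ring
    -- main inequality to aux1 function
    have f5 : Real.exp (c₂ * u) * (c₁ * (ε * u)) ≤
        Real.exp (ε ^ (-a)) - Real.exp (δ ^ (-a)) := by
      have f2 : δ ^ (-a) ≤ ε ^ (-a) :=
        Real.rpow_le_rpow_of_nonpos hε hδε (neg_nonpos.mpr ha.le)
      have hexpand : Real.exp (ε ^ (-a)) =
          Real.exp (δ ^ (-a)) * Real.exp (ε ^ (-a) - δ ^ (-a)) := by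
        rw [← Real.exp_add]; ring_nf
      have hone : ε ^ (-a) - δ ^ (-a) + 1 ≤ Real.exp (ε ^ (-a) - δ ^ (-a)) :=
        Real.add_one_le_exp _
      have hed : Real.exp (c₂ * u) ≤ Real.exp (δ ^ (-a)) := Real.exp_le_exp.mpr f3
      have hd0 : 0 ≤ ε ^ (-a) - δ ^ (-a) := le_trans (by positivity) f4
      calc Real.exp (c₂ * u) * (c₁ * (ε * u))
          ≤ Real.exp (c₂ * u) * (ε ^ (-a) - δ ^ (-a)) :=
            mul_le_mul_of_nonneg_left f4 (Real.exp_pos _).le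
        _ ≤ Real.exp (δ ^ (-a)) * (ε ^ (-a) - δ ^ (-a)) :=
            mul_le_mul_of_nonneg_right hed hd0
        _ ≤ Real.exp (δ ^ (-a)) * (Real.exp (ε ^ (-a) - δ ^ (-a)) - 1) :=
            mul_le_mul_of_nonneg_left (by linarith) (Real.exp_pos _).le
        _ = Real.exp (ε ^ (-a)) - Real.exp (δ ^ (-a)) := by
            rw [mul_sub, mul_one, ← hexpand]
    have f6 : u ^ (1 - 1/a) = ε * u := by
      have h1 : u ^ (-(1/a)) = ε := by
        rw [hudef, ← Real.rpow_mul hε.le,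
          show (-a) * -(1/a) = 1 by field_simp, Real.rpow_one]
      rw [show (1 - 1/a : ℝ) = -(1/a) + 1 by ring, Real.rpow_add hupos, h1,
        Real.rpow_one]
    show Real.log ζ - (Real.exp (ε ^ (-a)) - Real.exp (δ ^ (-a))) ≤
      (1/a) * Real.log u - c₁ * (u ^ (1-1/a) * Real.exp (c₂ * u))
    rw [f6, f1]
    have hre : c₁ * (ε * u * Real.exp (c₂ * u)) = Real.exp (c₂ * u) * (c₁ * (ε * u)) := by
      ring
    linarith [f5, hre]
  -- ζ * ψ δ / ψ ε → 0
  have hZ : Tendsto (fun ζ : ℝ => ζ * (ψ (ζ⁻¹ + (ζ⁻¹)^2) / ψ ζ⁻¹)) atTop (nhds 0) := by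
    apply (Real.tendsto_exp_atBot.comp hlogD).congr'
    filter_upwards [eventually_ge_atTop (2:ℝ)] with ζ hζ
    have hζ0 : (0:ℝ) < ζ := by linarith
    have hε : (0:ℝ) < ζ⁻¹ := inv_pos.mpr hζ0
    have hδpos : (0:ℝ) < ζ⁻¹ + (ζ⁻¹)^2 := by positivity
    have hδψ := hψ _ hδpos
    have hεψ := hψ _ hε
    show Real.exp (Real.log ζ - (Real.exp ((ζ⁻¹) ^ (-a)) -
        Real.exp ((ζ⁻¹ + (ζ⁻¹)^2) ^ (-a)))) = ζ * (ψ (ζ⁻¹ + (ζ⁻¹)^2) / ψ ζ⁻¹)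
    rw [hδψ, hεψ, ← Real.exp_sub]
    rw [show Real.log ζ - (Real.exp ((ζ⁻¹) ^ (-a)) - Real.exp ((ζ⁻¹ + (ζ⁻¹)^2) ^ (-a)))
        = (Real.exp ((ζ⁻¹ + (ζ⁻¹)^2) ^ (-a)) - 1 - (Real.exp ((ζ⁻¹) ^ (-a)) - 1))
          + Real.log ζ by ring]
    rw [Real.exp_add, Real.exp_log hζ0]
    ring
  -- g → 0 within Ioi 0
  set g : ℝ → ℝ := fun ζ => kA * (ζ⁻¹ + ζ * (ψ (ζ⁻¹ + (ζ⁻¹)^2) / ψ ζ⁻¹)) with hgdef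
  have hG0 : Tendsto g atTop (nhds 0) := by
    have h := (tendsto_inv_atTop_zero.add hZ).const_mul kA
    rw [show kA * ((0:ℝ) + 0) = 0 by ring] at h
    exact h
  have hGin : Tendsto g atTop (nhdsWithin 0 (Set.Ioi 0)) := by
    rw [tendsto_nhdsWithin_iff]
    refine ⟨hG0, ?_⟩
    filter_upwards [eventually_ge_atTop (2:ℝ)] with ζ hζ
    have hζ0 : (0:ℝ) < ζ := by linarith
    have hε : (0:ℝ) < ζ⁻¹ := inv_pos.mpr hζ0
    have h1 : 0 < ψ (ζ⁻¹ + (ζ⁻¹)^2) := hψpos _ (by positivity)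
    have h2 : 0 < ψ ζ⁻¹ := hψpos _ hε
    show (0:ℝ) < g ζ
    rw [hgdef]
    positivity
  have hGinv : Tendsto (fun ζ => (g ζ)⁻¹) atTop atTop :=
    Filter.Tendsto.inv_tendsto_nhdsGT_zero hGin
  -- final comparison
  apply tendsto_atTop_mono' atTop _ hGinv
  filter_upwards [eventually_ge_atTop (2:ℝ)] with ζ hζ
  have hζ0 : (0:ℝ) < ζ := by linarith
  set ε : ℝ := ζ⁻¹ with hεdef
  have hε : 0 < ε := inv_pos.mpr hζ0
  have hε2 : ε ≤ 1/2 := by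
    rw [hεdef, show (1:ℝ)/2 = 2⁻¹ by norm_num]
    exact inv_anti₀ two_pos hζ
  set δ : ℝ := ε + ε^2 with hδdef
  have hδpos : 0 < δ := by positivity
  have hδε : ε ≤ δ := by nlinarith
  have hδ1 : δ ≤ 1 := by nlinarith
  have hψε : 0 < ψ ε := hψpos _ hε
  have hψδ : 0 < ψ δ := hψpos _ hδpos
  have int1 : IntervalIntegrable ψ MeasureTheory.volume ε δ := by
    apply ContinuousOn.intervalIntegrable
    rw [Set.uIcc_of_le hδε]; exact hcont ε δ hε
  have int2 : IntervalIntegrable ψ MeasureTheory.volume δ 1 := by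
    apply ContinuousOn.intervalIntegrable
    rw [Set.uIcc_of_le hδ1]; exact hcont δ 1 hδpos
  have int3 : IntervalIntegrable ψ MeasureTheory.volume ε 1 := by
    apply ContinuousOn.intervalIntegrable
    rw [Set.uIcc_of_le (by linarith : ε ≤ 1)]; exact hcont ε 1 hε
  set I : ℝ := ∫ z in ε..1, ψ z with hIdef
  have Isplit : (∫ z in ε..δ, ψ z) + (∫ z in δ..1, ψ z) = I :=
    intervalIntegral.integral_add_adjacent_intervals int1 int2
  have Ipos : 0 < I :=
    intervalIntegral.intervalIntegral_pos_of_pos_on int3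
      (fun x hx => hψpos x (lt_trans hε hx.1)) (by linarith)
  have bound1 : (∫ z in ε..δ, ψ z) ≤ (δ - ε) * ψ ε := by
    have h := intervalIntegral.integral_mono_on hδε int1
      (intervalIntegrable_const (c := ψ ε)) (fun x hx => hmono ε x hε hx.1)
    rwa [intervalIntegral.integral_const, smul_eq_mul] at h
  have bound2 : (∫ z in δ..1, ψ z) ≤ ψ δ := by
    have h := intervalIntegral.integral_mono_on hδ1 int2
      (intervalIntegrable_const (c := ψ δ)) (fun x hx => hmono δ x hδpos hx.1)
    rw [intervalIntegral.integral_const, smul_eq_mul] at h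
    nlinarith
  have habs : |Λ ζ| = ζ * (kA * I) := by
    rw [hΛ ζ (by linarith), one_div, hφ ε hε (by linarith), mul_neg, abs_neg,
      abs_of_pos (by positivity)]
  have hζε : ζ * ε = 1 := mul_inv_cancel₀ (ne_of_gt hζ0)
  have key : ζ * (kA * I) ≤ g ζ * ψ ε := by
    have hdm : ψ δ / ψ ε * ψ ε = ψ δ := div_mul_cancel₀ _ (ne_of_gt hψε)
    have hgζ : g ζ = kA * (ε + ζ * (ψ δ / ψ ε)) := rfl
    have hsum : I ≤ ε^2 * ψ ε + ψ δ := by nlinarith [Isplit, bound1, bound2]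
    rw [hgζ]
    have h2 : ζ * (kA * I) ≤ ζ * kA * (ε^2 * ψ ε + ψ δ) := by
      have := mul_le_mul_of_nonneg_left hsum (by positivity : (0:ℝ) ≤ ζ * kA)
      linarith [this]
    have h3 : ζ * kA * (ε^2 * ψ ε + ψ δ) = kA * (ε + ζ * (ψ δ / ψ ε)) * ψ ε := by
      have hze : ζ * ε^2 = ε := by nlinarith
      have hd2 : ζ * (ψ δ / ψ ε) * ψ ε = ζ * ψ δ := by rw [mul_assoc, hdm]
      calc ζ * kA * (ε^2 * ψ ε + ψ δ) = kA * ((ζ * ε^2) * ψ ε + ζ * ψ δ) := by ring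
        _ = kA * (ε * ψ ε + ζ * (ψ δ / ψ ε) * ψ ε) := by rw [hze, hd2]
        _ = kA * (ε + ζ * (ψ δ / ψ ε)) * ψ ε := by ring
    linarith
  show (g ζ)⁻¹ ≤ ψ (1/ζ) / |Λ ζ|
  rw [one_div, habs]
  have hgpos : 0 < g ζ := by
    have h1 : 0 < ψ (ζ⁻¹ + (ζ⁻¹)^2) := hψpos _ (by positivity)
    have h2 : 0 < ψ ζ⁻¹ := hψpos _ hε
    rw [hgdef]; positivity
  have hX : 0 < ζ * (kA * I) := by positivity
  rw [inv_eq_one_div]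
  rw [div_le_div_iff₀ hgpos hX]
  nlinarith [key]
end
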